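/- arXiv:2511.15018 — 3 statements merged into one kernel-verified Lean document; each statement's English description precedes it below -/
import Mathlib

section
/- Let α, β > 0, p ∈ (0,1), q > 1. Then for every v₀ > 0, the solution of the scalar ODE v̇(t) = −(α v(t)^p + β v(t)^q), v(0) = v₀, reaches zero at a time T(v₀) satisfying T(v₀) ≤ ∫₀^∞ dv / (α v^p + β v^q) = Γ((1−p)/(q−p)) Γ((q−1)/(q−p)) (α/β)^((1−p)/(q−p)) / (α (q−p)). -/
open MeasureTheory Set intervalIntegral in
lemma realBeta_s7 (a b : ℝ) (ha : 0 < a) (hb : 0 < b) :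
    ∫ x in (0:ℝ)..1, x ^ (a-1) * (1-x) ^ (b-1) =
      Real.Gamma a * Real.Gamma b / Real.Gamma (a+b) := by
  have h := Complex.Gamma_mul_Gamma_eq_betaIntegral (s := (a:ℂ)) (t := (b:ℂ))
    (by simpa using ha) (by simpa using hb)
  have hbeta : Complex.betaIntegral a b =
      ((∫ x in (0:ℝ)..1, x ^ (a-1) * (1-x) ^ (b-1) : ℝ) : ℂ) := by
    rw [Complex.betaIntegral, ← intervalIntegral.integral_ofReal]
    refine intervalIntegral.integral_congr fun x hx => ?_
    rw [Set.uIcc_of_le zero_le_one] at hx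
    rw [Complex.ofReal_mul, Complex.ofReal_cpow hx.1,
      Complex.ofReal_cpow (by linarith [hx.2] : (0:ℝ) ≤ 1 - x)]
    push_cast
    ring
  have hG : (0:ℝ) < Real.Gamma (a+b) := Real.Gamma_pos_of_pos (by linarith)
  have h2 : Real.Gamma a * Real.Gamma b =
      Real.Gamma (a+b) * ∫ x in (0:ℝ)..1, x ^ (a-1) * (1-x) ^ (b-1) := by
    rw [hbeta] at h
    rw [show ((a:ℂ)+(b:ℂ)) = ((a+b:ℝ):ℂ) by push_cast; ring, Complex.Gamma_ofReal,
      Complex.Gamma_ofReal, Complex.Gamma_ofReal] at h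
    exact_mod_cast h
  field_simp [h2]
  rw [h2]; ring

open MeasureTheory Set Real in
lemma subst_value (α β p q : ℝ) (hα : 0 < α) (hβ : 0 < β)
    (hp0 : 0 < p) (hp1 : p < 1) (hq : 1 < q) :
    (∫ w in Set.Ioi (0:ℝ), 1 / (α * w ^ p + β * w ^ q)) =
      Real.Gamma ((1 - p) / (q - p)) * Real.Gamma ((q - 1) / (q - p)) *
        (α / β) ^ ((1 - p) / (q - p)) / (α * (q - p)) := by
  have hqp : (0:ℝ) < q - p := by linarith
  set m : ℝ := 1 / (q - p) with hm
  have hm0 : 0 < m := by positivity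
  set c : ℝ := (α / β) ^ m with hc
  have hc0 : 0 < c := rpow_pos_of_pos (div_pos hα hβ) m
  set a : ℝ := (1 - p) / (q - p) with ha
  set b : ℝ := (q - 1) / (q - p) with hb
  have ha0 : 0 < a := div_pos (by linarith) hqp
  have hb0 : 0 < b := div_pos (by linarith) hqp
  have hab : a + b = 1 := by rw [ha, hb, ← add_div, div_eq_one_iff_eq hqp.ne']; ring
  have ham : a = m * (1 - p) := by rw [ha, hm]; ring
  set φ : ℝ → ℝ := fun x => c * (x / (1 - x)) ^ m with hφ
  set φ' : ℝ → ℝ := fun x => c * (m * (x / (1 - x)) ^ (m - 1) * ((1 - x)^2)⁻¹) with hφ'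
  -- derivative
  have hderiv : ∀ x ∈ Ioo (0:ℝ) 1, HasDerivWithinAt φ (φ' x) (Ioo 0 1) x := by
    intro x hx
    have hx1 : 0 < 1 - x := by linarith [hx.2]
    have hu : 0 < x / (1 - x) := div_pos hx.1 hx1
    have h1 : HasDerivAt (fun x : ℝ => x / (1 - x)) (((1-x) - x * (-1)) / (1-x)^2) x := by
      simpa [Pi.div_def] using (hasDerivAt_id x).div ((hasDerivAt_id x).const_sub 1) (by positivity)
    have h2 : HasDerivAt (fun x : ℝ => (x / (1 - x)) ^ m)
        (m * (x / (1-x)) ^ (m - 1) * (((1-x) - x * (-1)) / (1-x)^2)) x := by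
      exact (Real.hasDerivAt_rpow_const (Or.inl hu.ne')).comp x h1
    have h3 := h2.const_mul c
    convert h3.hasDerivWithinAt using 1
    · rfl
    · rfl
    rw [hφ']
    field_simp
    ring
  -- injectivity
  have hinj : InjOn φ (Ioo (0:ℝ) 1) := by
    intro x hx y hy hxy
    have hx1 : 0 < 1 - x := by linarith [hx.2]
    have hy1 : 0 < 1 - y := by linarith [hy.2]
    have hux : 0 ≤ x / (1 - x) := (div_pos hx.1 hx1).le
    have huy : 0 ≤ y / (1 - y) := (div_pos hy.1 hy1).le
    have h1 : (x / (1 - x)) ^ m = (y / (1 - y)) ^ m := by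
      have := mul_left_cancel₀ hc0.ne' hxy
      exact this
    have h2 : x / (1 - x) = y / (1 - y) :=
      Real.rpow_left_injOn hm0.ne' hux huy h1
    field_simp at h2
    linarith
  -- image
  have himg : φ '' Ioo (0:ℝ) 1 = Ioi (0:ℝ) := by
    ext w
    constructor
    · rintro ⟨x, hx, rfl⟩
      have hx1 : 0 < 1 - x := by linarith [hx.2]
      exact mul_pos hc0 (rpow_pos_of_pos (div_pos hx.1 hx1) m)
    · intro hw
      have hw0 : 0 < (w : ℝ) := hw
      set t : ℝ := (w / c) ^ (q - p) with ht
      have ht0 : 0 < t := rpow_pos_of_pos (div_pos hw0 hc0) _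
      refine ⟨t / (1 + t), ⟨by positivity, ?_⟩, ?_⟩
      · rw [div_lt_one (by positivity)]; linarith
      · have h1 : (1:ℝ) - t / (1 + t) = 1 / (1 + t) := by field_simp; ring
        have h2 : t / (1 + t) / (1 - t / (1 + t)) = t := by rw [h1]; field_simp
        rw [hφ]
        simp only [h2]
        rw [ht, ← Real.rpow_mul (div_pos hw0 hc0).le,
          show (q - p) * m = 1 by rw [hm]; field_simp, Real.rpow_one]
        field_simp
  -- main computation
  rw [← himg, integral_image_eq_integral_abs_deriv_smul measurableSet_Ioo hderiv hinj]
  have hcp : (0:ℝ) < c ^ p := rpow_pos_of_pos hc0 p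
  have hc1p : c ^ ((1:ℝ) - p) * c ^ p = c := by
    rw [← Real.rpow_add hc0]; norm_num
  have hkey : ∀ x ∈ Ioo (0:ℝ) 1, |φ' x| • (1 / (α * φ x ^ p + β * φ x ^ q)) =
      (c ^ ((1:ℝ)-p) * m / α) * (x ^ (a-1) * (1-x) ^ (b-1)) := by
    intro x hx
    have hx1 : 0 < 1 - x := by linarith [hx.2]
    set u : ℝ := x / (1 - x) with hu
    have hu0 : 0 < u := div_pos hx.1 hx1
    have hump : (0:ℝ) < u ^ (m * p) := rpow_pos_of_pos hu0 _
    have hφx : φ x = c * u ^ m := rfl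
    have hwp : (c * u ^ m) ^ p = c ^ p * u ^ (m * p) := by
      rw [Real.mul_rpow hc0.le (Real.rpow_nonneg hu0.le m), ← Real.rpow_mul hu0.le]
    have hwq : (c * u ^ m) ^ q = c ^ q * u ^ (m * q) := by
      rw [Real.mul_rpow hc0.le (Real.rpow_nonneg hu0.le m), ← Real.rpow_mul hu0.le]
    have hcq : β * c ^ q = α * c ^ p := by
      have h1 : c ^ (q - p) = α / β := by
        rw [hc, ← Real.rpow_mul (div_pos hα hβ).le,
          show m * (q - p) = 1 by rw [hm]; field_simp, Real.rpow_one]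
      have h2 : c ^ q = c ^ p * (α / β) := by
        rw [← h1, ← Real.rpow_add hc0]; ring_nf
      rw [h2]; field_simp; try ring
    have humq : u ^ (m * q) = u ^ (m * p) * u := by
      rw [show m * q = m * p + 1 by rw [hm]; field_simp; ring, Real.rpow_add hu0,
        Real.rpow_one]
    have h1x : 1 + u = (1 - x)⁻¹ := by
      rw [hu]; field_simp; ring
    have hden : α * φ x ^ p + β * φ x ^ q = α * c ^ p * u ^ (m * p) * (1 - x)⁻¹ := by
      rw [hφx, hwp, hwq, humq]
      linear_combination u ^ (m*p) * u * hcq + (α * c ^ p * u ^ (m*p)) * h1x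
    have key : u ^ (m - 1) = u ^ (a - 1) * u ^ (m * p) := by
      rw [← Real.rpow_add hu0]; congr 1; rw [ham]; ring
    have key2 : u ^ (a - 1) = x ^ (a-1) * ((1-x) ^ (a-1))⁻¹ := by
      rw [hu, Real.div_rpow hx.1.le hx1.le, div_eq_mul_inv]
    have key3 : (1-x) ^ (b-1) = ((1-x) ^ (a-1))⁻¹ * (1-x)⁻¹ := by
      rw [show b - 1 = (-(a-1)) + (-1) by linarith [hab], Real.rpow_add hx1,
        Real.rpow_neg hx1.le, Real.rpow_neg_one]
    have hφ'pos : 0 < φ' x := by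
      rw [hφ']
      have := Real.rpow_pos_of_pos hu0 (m-1)
      positivity
    rw [abs_of_pos hφ'pos, smul_eq_mul, hden, hφ']
    simp only [← hu]
    rw [key]
    have hxa : (0:ℝ) < x ^ (a-1) := rpow_pos_of_pos hx.1 _
    have hxb : (0:ℝ) < (1-x) ^ (a-1) := rpow_pos_of_pos hx1 _
    have hua : (0:ℝ) < u ^ (a-1) := rpow_pos_of_pos hu0 _
    trans (c ^ ((1:ℝ)-p) * m / α * (u ^ (a-1) * (1-x)⁻¹))
    · field_simp
      linear_combination (-1:ℝ) * hc1p
    · rw [key2, key3]; ring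
  rw [setIntegral_congr_fun measurableSet_Ioo hkey, integral_const_mul,
    ← integral_Ioc_eq_integral_Ioo, ← intervalIntegral.integral_of_le zero_le_one,
    realBeta_s7 a b ha0 hb0, hab, Real.Gamma_one]
  have hca : c ^ ((1:ℝ) - p) = (α / β) ^ a := by
    rw [hc, ← Real.rpow_mul (div_pos hα hβ).le, ← ham]
  rw [hca, ha]
  rw [hm]
  field_simp

open MeasureTheory Set in
lemma fCont (α β p q : ℝ) (hα : 0 < α) (hβ : 0 < β) :
    ContinuousOn (fun w : ℝ => 1 / (α * w ^ p + β * w ^ q)) (Ioi (0:ℝ)) := by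
  apply ContinuousOn.div continuousOn_const
  · exact (continuousOn_const.mul (fun w hw => (Real.continuousAt_rpow_const w p
      (Or.inl (ne_of_gt hw))).continuousWithinAt)).add
      (continuousOn_const.mul (fun w hw => (Real.continuousAt_rpow_const w q
      (Or.inl (ne_of_gt hw))).continuousWithinAt))
  · intro w hw
    have h1 : 0 < α * w ^ p := mul_pos hα (Real.rpow_pos_of_pos hw p)
    have h2 : 0 < β * w ^ q := mul_pos hβ (Real.rpow_pos_of_pos hw q)
    positivity

open MeasureTheory Set in
lemma fInt (α β p q : ℝ) (hα : 0 < α) (hβ : 0 < β)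
    (hp0 : 0 < p) (hp1 : p < 1) (hq : 1 < q) :
    IntegrableOn (fun w : ℝ => 1 / (α * w ^ p + β * w ^ q)) (Ioi (0:ℝ)) := by
  have hpos : ∀ w : ℝ, 0 < w → 0 < α * w ^ p + β * w ^ q := fun w hw => by
    have h1 : 0 < α * w ^ p := mul_pos hα (Real.rpow_pos_of_pos hw p)
    have h2 : 0 < β * w ^ q := mul_pos hβ (Real.rpow_pos_of_pos hw q)
    linarith
  have hmeas : AEStronglyMeasurable (fun w : ℝ => 1 / (α * w ^ p + β * w ^ q))
      (volume.restrict (Ioi (0:ℝ))) :=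
    (fCont α β p q hα hβ).aestronglyMeasurable measurableSet_Ioi
  rw [← Ioc_union_Ioi_eq_Ioi (zero_le_one)]
  refine IntegrableOn.union ?_ ?_
  · have hg0 : IntegrableOn (fun w : ℝ => w ^ (-p)) (Ioc (0:ℝ) 1) := by
      rw [integrableOn_Ioc_iff_integrableOn_Ioo]
      exact (intervalIntegral.integrableOn_Ioo_rpow_iff one_pos).mpr (by linarith)
    refine Integrable.mono' (hg0.const_mul α⁻¹) (hmeas.mono_set Ioc_subset_Ioi_self) ?_
    rw [ae_restrict_iff' measurableSet_Ioc]
    refine ae_of_all _ fun w hw => ?_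
    have hw0 := hw.1
    have h2 : 0 < β * w ^ q := mul_pos hβ (Real.rpow_pos_of_pos hw0 q)
    rw [Real.norm_eq_abs, abs_of_pos (one_div_pos.mpr (hpos w hw0)),
      Real.rpow_neg hw0.le, ← mul_inv, ← one_div]
    exact one_div_le_one_div_of_le (mul_pos hα (Real.rpow_pos_of_pos hw0 p)) (by linarith)
  · have hg0 : IntegrableOn (fun w : ℝ => w ^ (-q)) (Ioi (1:ℝ)) :=
      integrableOn_Ioi_rpow_of_lt (by linarith) one_pos
    refine Integrable.mono' (hg0.const_mul β⁻¹) (hmeas.mono_set (Ioi_subset_Ioi zero_le_one)) ?_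
    rw [ae_restrict_iff' measurableSet_Ioi]
    refine ae_of_all _ fun w hw => ?_
    have hw0 : (0:ℝ) < w := lt_trans one_pos hw
    have h1 : 0 < α * w ^ p := mul_pos hα (Real.rpow_pos_of_pos hw0 p)
    rw [Real.norm_eq_abs, abs_of_pos (one_div_pos.mpr (hpos w hw0)),
      Real.rpow_neg hw0.le, ← mul_inv, ← one_div]
    exact one_div_le_one_div_of_le (mul_pos hβ (Real.rpow_pos_of_pos hw0 q)) (by linarith)


open MeasureTheory in
theorem stmt_7 (α β p q v₀ : ℝ) (hα : 0 < α) (hβ : 0 < β)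
    (hp0 : 0 < p) (hp1 : p < 1) (hq : 1 < q) (hv₀ : 0 < v₀)
    (v : ℝ → ℝ) (hv0 : v 0 = v₀) (hnonneg : ∀ t, 0 ≤ t → 0 ≤ v t)
    (hode : ∀ t, 0 ≤ t → HasDerivAt v (-(α * v t ^ p + β * v t ^ q)) t) :
    (∃ T, 0 ≤ T ∧ v T = 0 ∧
        T ≤ ∫ w in Set.Ioi (0:ℝ), 1 / (α * w ^ p + β * w ^ q)) ∧
      (∫ w in Set.Ioi (0:ℝ), 1 / (α * w ^ p + β * w ^ q)) =
        Real.Gamma ((1 - p) / (q - p)) * Real.Gamma ((q - 1) / (q - p)) *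
          (α / β) ^ ((1 - p) / (q - p)) / (α * (q - p)) := by
  refine ⟨?_, subst_value α β p q hα hβ hp0 hp1 hq⟩
  set f : ℝ → ℝ := fun w => 1 / (α * w ^ p + β * w ^ q) with hf
  have hpos : ∀ w : ℝ, 0 < w → 0 < α * w ^ p + β * w ^ q := fun w hw => by
    have h1 : 0 < α * w ^ p := mul_pos hα (Real.rpow_pos_of_pos hw p)
    have h2 : 0 < β * w ^ q := mul_pos hβ (Real.rpow_pos_of_pos hw q)
    linarith
  have hfpos : ∀ w : ℝ, 0 < w → 0 < f w := fun w hw => one_div_pos.mpr (hpos w hw)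
  have hInt : IntegrableOn f (Set.Ioi 0) := fInt α β p q hα hβ hp0 hp1 hq
  set G : ℝ → ℝ := fun x => ∫ w in (0:ℝ)..x, f w with hG
  set T₀ : ℝ := G v₀ with hT₀def
  have hII : ∀ x : ℝ, 0 ≤ x → IntervalIntegrable f volume 0 x := fun x hx => by
    rw [intervalIntegrable_iff_integrableOn_Ioc_of_le hx]
    exact hInt.mono_set Set.Ioc_subset_Ioi_self
  have hT₀I : T₀ ≤ ∫ w in Set.Ioi (0:ℝ), f w := by
    rw [hT₀def, hG]
    simp only [intervalIntegral.integral_of_le hv₀.le]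
    refine setIntegral_mono_set hInt ?_ (HasSubset.Subset.eventuallyLE Set.Ioc_subset_Ioi_self)
    filter_upwards [ae_restrict_mem measurableSet_Ioi] with w hw
    exact (hfpos w hw).le
  have hT₀0 : 0 ≤ T₀ := by
    have heq : T₀ = ∫ w in Set.Ioc (0:ℝ) v₀, f w :=
      intervalIntegral.integral_of_le hv₀.le
    rw [heq]
    exact setIntegral_nonneg measurableSet_Ioc fun w hw => (hfpos w hw.1).le
  have hclaim : ∃ t, 0 ≤ t ∧ t ≤ T₀ ∧ v t = 0 := by
    by_contra hcon
    push_neg at hcon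
    have hvpos : ∀ t, 0 ≤ t → t ≤ T₀ → 0 < v t := fun t h1 h2 =>
      lt_of_le_of_ne (hnonneg t h1) (Ne.symm (hcon t h1 h2))
    have hGd : ∀ t, 0 ≤ t → t ≤ T₀ → HasDerivAt (fun s => G (v s) + s) 0 t := by
      intro t h1 h2
      have hvt := hvpos t h1 h2
      have hfc : ContinuousAt f (v t) :=
        (fCont α β p q hα hβ).continuousAt (Ioi_mem_nhds hvt)
      have hmeasat : StronglyMeasurableAtFilter f (nhds (v t)) :=
        ⟨Set.Ioi 0, Ioi_mem_nhds hvt,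
          (fCont α β p q hα hβ).aestronglyMeasurable measurableSet_Ioi⟩
      have hFTC : HasDerivAt G (f (v t)) (v t) :=
        intervalIntegral.integral_hasDerivAt_right (hII (v t) hvt.le) hmeasat hfc
      have hcomp : HasDerivAt (fun s => G (v s))
          (f (v t) * (-(α * v t ^ p + β * v t ^ q))) t :=
        hFTC.comp t (hode t h1)
      have hsum := hcomp.add (hasDerivAt_id t)
      have hval : f (v t) * (-(α * v t ^ p + β * v t ^ q)) + 1 = 0 := by
        rw [hf]
        field_simp [ne_of_gt (hpos _ hvt)]
        ring
      rw [hval] at hsum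
      simpa [id, Pi.add_def] using hsum
    have hconst := eq_of_has_deriv_right_eq (f' := fun _ => (0:ℝ))
      (fun s hs => (hGd s hs.1 hs.2.le).hasDerivWithinAt)
      (fun s _ => (hasDerivAt_const s (G v₀)).hasDerivWithinAt)
      (fun s hs => ((hGd s hs.1 hs.2).continuousAt).continuousWithinAt)
      (continuousOn_const)
      (by rw [hv0]; simp)
    have h1 : G (v T₀) + T₀ = G v₀ := hconst T₀ ⟨hT₀0, le_rfl⟩
    have h2 : G (v T₀) = 0 := by rw [← hT₀def] at h1; linarith
    have h3 : 0 < G (v T₀) := by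
      rw [hG]
      exact intervalIntegral.intervalIntegral_pos_of_pos_on
        (hII _ (hvpos T₀ hT₀0 le_rfl).le)
        (fun w hw => hfpos w hw.1) (hvpos T₀ hT₀0 le_rfl)
    linarith
  obtain ⟨t, h0, h1, h2⟩ := hclaim
  exact ⟨t, h0, h2, le_trans h1 hT₀I⟩
end

section
/- Let α, β > 0, p ∈ (0,1), and q > 1. Then the improper integral ∫₀^∞ dv / (α v^p + β v^q) converges and equals (1/(α(q−p))) (α/β)^((1−p)/(q−p)) · B((1−p)/(q−p), (q−1)/(q−p)), where B denotes the Beta function. -/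
open MeasureTheory Set Real


/-- The Beta function `B(x, y) = Γ(x)Γ(y)/Γ(x+y)`. -/
noncomputable def realBeta (x y : ℝ) : ℝ := Real.Gamma x * Real.Gamma y / Real.Gamma (x + y)

lemma betaIoo (x y : ℝ) (hx : 0 < x) (hy : 0 < y) :
    IntegrableOn (fun t : ℝ => t ^ (x - 1) * (1 - t) ^ (y - 1)) (Ioo (0:ℝ) 1) ∧
      (∫ t in Ioo (0:ℝ) 1, t ^ (x - 1) * (1 - t) ^ (y - 1)) = realBeta x y := by
  have hxc : 0 < Complex.re (x : ℂ) := by simpa using hx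
  have hyc : 0 < Complex.re (y : ℂ) := by simpa using hy
  have hC := Complex.betaIntegral_convergent hxc hyc
  have hIoc : IntegrableOn
      (fun t : ℝ => (t : ℂ) ^ ((x : ℂ) - 1) * (1 - (t : ℂ)) ^ ((y : ℂ) - 1)) (Ioc (0:ℝ) 1) :=
    (intervalIntegrable_iff_integrableOn_Ioc_of_le zero_le_one).mp hC
  have hIoo := hIoc.mono_set Ioo_subset_Ioc_self
  have hcong : ∀ t ∈ Ioo (0:ℝ) 1,
      (t : ℂ) ^ ((x : ℂ) - 1) * (1 - (t : ℂ)) ^ ((y : ℂ) - 1)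
        = ((t ^ (x - 1) * (1 - t) ^ (y - 1) : ℝ) : ℂ) := by
    intro t ht
    rw [Complex.ofReal_mul, Complex.ofReal_cpow ht.1.le,
      Complex.ofReal_cpow (by linarith [ht.2] : (0:ℝ) ≤ 1 - t)]
    push_cast
    ring
  constructor
  · refine IntegrableOn.congr_fun hIoo.re (fun t ht => ?_) measurableSet_Ioo
    rw [hcong t ht]; exact Complex.ofReal_re _
  · have hΓ : Complex.Gamma ((x : ℂ) + (y : ℂ)) ≠ 0 := by
      rw [← Complex.ofReal_add, Complex.Gamma_ofReal]
      exact_mod_cast (Real.Gamma_pos_of_pos (by linarith)).ne'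
    have hval : Complex.betaIntegral (x : ℂ) (y : ℂ) = ((realBeta x y : ℝ) : ℂ) := by
      have h := Complex.Gamma_mul_Gamma_eq_betaIntegral hxc hyc
      have : Complex.betaIntegral (x : ℂ) (y : ℂ)
          = Complex.Gamma x * Complex.Gamma y / Complex.Gamma ((x : ℂ) + (y : ℂ)) := by
        field_simp at h ⊢; linear_combination -h
      rw [this, ← Complex.ofReal_add, Complex.Gamma_ofReal, Complex.Gamma_ofReal,
        Complex.Gamma_ofReal, realBeta]
      push_cast
      ring
    have h2 : ∫ t in Ioo (0:ℝ) 1, ((t ^ (x - 1) * (1 - t) ^ (y - 1) : ℝ) : ℂ)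
        = ((realBeta x y : ℝ) : ℂ) := by
      rw [← setIntegral_congr_fun measurableSet_Ioo hcong, ← integral_Ioc_eq_integral_Ioo,
        ← intervalIntegral.integral_of_le zero_le_one, ← hval]
      rfl
    exact Complex.ofReal_injective ((integral_ofReal (𝕜 := ℂ)).symm.trans h2)

theorem stmt_8 (α β p q : ℝ) (hα : 0 < α) (hβ : 0 < β)
    (hp0 : 0 < p) (hp1 : p < 1) (hq : 1 < q) :
    MeasureTheory.IntegrableOn (fun w => 1 / (α * w ^ p + β * w ^ q)) (Set.Ioi (0:ℝ)) ∧
      (∫ w in Set.Ioi (0:ℝ), 1 / (α * w ^ p + β * w ^ q)) =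
        (1 / (α * (q - p))) * (α / β) ^ ((1 - p) / (q - p)) *
          realBeta ((1 - p) / (q - p)) ((q - 1) / (q - p)) := by
  have hqp : 0 < q - p := by linarith
  set m : ℝ := 1 / (q - p) with hm
  have hm0 : 0 < m := by positivity
  have hm1 : m * (q - p) = 1 := by rw [hm]; field_simp
  set x : ℝ := (1 - p) / (q - p) with hxdef
  set y : ℝ := (q - 1) / (q - p) with hydef
  have hx0 : 0 < x := div_pos (by linarith) hqp
  have hy0 : 0 < y := div_pos (by linarith) hqp
  have hxy : x + y = 1 := by rw [hxdef, hydef]; field_simp; ring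
  have hab : 0 < α / β := div_pos hα hβ
  set K : ℝ := 1 / (α * (q - p)) * (α / β) ^ x with hK
  set φ : ℝ → ℝ := fun t => (α / β * (t / (1 - t))) ^ m with hφ
  set φ' : ℝ → ℝ := fun t => α / β / (1 - t) ^ 2 * m * (α / β * (t / (1 - t))) ^ (m - 1)
    with hφ'
  have hu0 : ∀ t ∈ Ioo (0:ℝ) 1, 0 < α / β * (t / (1 - t)) := fun t ht =>
    mul_pos hab (div_pos ht.1 (by linarith [ht.2]))
  have hderiv : ∀ t ∈ Ioo (0:ℝ) 1, HasDerivAt φ (φ' t) t := by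
    intro t ht
    have h1t : (0:ℝ) < 1 - t := by linarith [ht.2]
    have hu : HasDerivAt (fun s : ℝ => α / β * (s / (1 - s))) (α / β * (1 / (1 - t) ^ 2)) t := by
      have h := ((hasDerivAt_id t).div ((hasDerivAt_const t (1:ℝ)).sub (hasDerivAt_id t))
        h1t.ne').const_mul (α / β)
      refine HasDerivAt.congr_deriv h ?_
      simp only [Pi.sub_apply, id_eq, id]; ring
    have h2 := hu.rpow_const (p := m) (Or.inl (hu0 t ht).ne')
    convert h2 using 1
    rw [hφ']
    ring
  have hderiv_pos : ∀ t ∈ Ioo (0:ℝ) 1, 0 < φ' t := by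
    intro t ht
    have h1t : (0:ℝ) < 1 - t := by linarith [ht.2]
    have := rpow_pos_of_pos (hu0 t ht) (m - 1)
    rw [hφ']
    positivity
  have h_inj : InjOn φ (Ioo (0:ℝ) 1) := by
    apply StrictMonoOn.injOn
    intro a ha b hb hlt
    have h1a : (0:ℝ) < 1 - a := by linarith [ha.2]
    have h1b : (0:ℝ) < 1 - b := by linarith [hb.2]
    have hin : α / β * (a / (1 - a)) < α / β * (b / (1 - b)) := by
      apply mul_lt_mul_of_pos_left _ hab
      rw [div_lt_div_iff₀ h1a h1b]
      nlinarith
    exact Real.rpow_lt_rpow (hu0 a ha).le hin hm0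
  have h_img : φ '' Ioo (0:ℝ) 1 = Ioi (0:ℝ) := by
    apply Subset.antisymm
    · rintro _ ⟨t, ht, rfl⟩
      exact mem_Ioi.mpr (rpow_pos_of_pos (hu0 t ht) m)
    · intro v hv
      have hv0 : (0:ℝ) < v := hv
      set w : ℝ := β / α * v ^ (q - p) with hw
      have hw0 : 0 < w := mul_pos (div_pos hβ hα) (rpow_pos_of_pos hv0 _)
      refine ⟨w / (1 + w), ⟨by positivity, ?_⟩, ?_⟩
      · rw [div_lt_one (by linarith)]; linarith
      · show (α / β * (w / (1 + w) / (1 - w / (1 + w)))) ^ m = v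
        have h2 : w / (1 + w) / (1 - w / (1 + w)) = w := by
          rw [show (1:ℝ) - w / (1 + w) = 1 / (1 + w) by field_simp; ring]
          field_simp
        rw [h2, hw, show α / β * (β / α * v ^ (q - p)) = v ^ (q - p) by field_simp,
          ← Real.rpow_mul hv0.le, show (q - p) * m = 1 by rw [mul_comm]; exact hm1,
          Real.rpow_one]
  have hkey : ∀ t ∈ Ioo (0:ℝ) 1,
      |φ' t| • (1 / (α * φ t ^ p + β * φ t ^ q)) = K * (t ^ (x - 1) * (1 - t) ^ (y - 1)) := by
    intro t ht
    have h1t : (0:ℝ) < 1 - t := by linarith [ht.2]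
    set u : ℝ := α / β * (t / (1 - t)) with hu
    have hupos : 0 < u := hu0 t ht
    have hφt : φ t = u ^ m := rfl
    have hdenom : α * φ t ^ p + β * φ t ^ q = α * u ^ (m * p) / (1 - t) := by
      rw [hφt, ← Real.rpow_mul hupos.le, ← Real.rpow_mul hupos.le]
      have hsplit : u ^ (m * q) = u ^ (m * p) * u := by
        rw [show m * q = m * p + 1 by rw [← hm1]; ring, Real.rpow_add hupos, Real.rpow_one]
      rw [hsplit, show β * (u ^ (m * p) * u) = u ^ (m * p) * (β * u) by ring,
        show β * u = α * (t / (1 - t)) by rw [hu]; field_simp]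
      field_simp
      ring
    have hum : u ^ (m - 1) = u ^ (x - 1) * u ^ (m * p) := by
      rw [← Real.rpow_add hupos]
      congr 1
      rw [hxdef, hm]
      field_simp
      ring
    have hux : u ^ (x - 1) = (α / β) ^ x * (α / β)⁻¹ * (t ^ (x - 1) / (1 - t) ^ (x - 1)) := by
      rw [hu, Real.mul_rpow hab.le (div_pos ht.1 h1t).le,
        Real.div_rpow ht.1.le h1t.le,
        show x - 1 = x + (-1) by ring, Real.rpow_add hab, Real.rpow_neg_one]
    have hyx : (1 - t) ^ (y - 1) = ((1 - t) ^ (x - 1))⁻¹ * (1 - t)⁻¹ := by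
      rw [show y - 1 = -(x - 1) + (-1) by linarith, Real.rpow_add h1t,
        Real.rpow_neg h1t.le, Real.rpow_neg_one]
    have habs : |φ' t| = φ' t := abs_of_pos (hderiv_pos t ht)
    rw [smul_eq_mul, habs, hdenom, hφ', hK, hyx]
    show α / β / (1 - t) ^ 2 * m * u ^ (m - 1) * (1 / (α * u ^ (m * p) / (1 - t)))
        = 1 / (α * (q - p)) * (α / β) ^ x * (t ^ (x - 1) * (((1 - t) ^ (x - 1))⁻¹ * (1 - t)⁻¹))
    rw [hum, hux, hm]
    have h1 : (0:ℝ) < u ^ (m * p) := rpow_pos_of_pos hupos _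
    have h2 : (0:ℝ) < (1 - t) ^ (x - 1) := rpow_pos_of_pos h1t _
    field_simp
  have hbeta := betaIoo x y hx0 hy0
  constructor
  · rw [← h_img,
      integrableOn_image_iff_integrableOn_abs_deriv_smul measurableSet_Ioo
        (fun t ht => (hderiv t ht).hasDerivWithinAt) h_inj]
    exact IntegrableOn.congr_fun (hbeta.1.const_mul K) (fun t ht => (hkey t ht).symm)
      measurableSet_Ioo
  · rw [← h_img,
      integral_image_eq_integral_abs_deriv_smul measurableSet_Ioo
        (fun t ht => (hderiv t ht).hasDerivWithinAt) h_inj,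
      setIntegral_congr_fun measurableSet_Ioo hkey, integral_const_mul, hbeta.2, hK]
end

section
/- Let γ₁ ∈ (0,1), γ₂ > 1, and for x ∈ ℝ² with 0 < s(x) = 1 − x₂² let V(x) = ‖x‖₂²/(2 s(x)). Then −(‖x‖_{γ₁+1}^{γ₁+1}/s(x)^{(γ₁+1)/2} + ‖x‖_{γ₂+1}^{γ₂+1}/s(x)^{(γ₂+1)/2}) ≤ −2^{(γ₁+1)/2} V(x)^{(γ₁+1)/2} − 2 V(x)^{(γ₂+1)/2}. -/
open Real

lemma auxA (a b p : ℝ) (ha : 0 ≤ a) (hb : 0 ≤ b) (hp : 0 ≤ p) (hp1 : p ≤ 1) :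
    (a + b) ^ p ≤ a ^ p + b ^ p := by
  have h := NNReal.rpow_add_le_add_rpow a.toNNReal b.toNNReal hp hp1
  have h2 := NNReal.coe_le_coe.mpr h
  push_cast at h2
  rwa [Real.coe_toNNReal a ha, Real.coe_toNNReal b hb] at h2

lemma auxB (a b p : ℝ) (ha : 0 ≤ a) (hb : 0 ≤ b) (hp : 1 ≤ p) :
    (a + b) ^ p ≤ 2 ^ (p - 1) * (a ^ p + b ^ p) := by
  have h := NNReal.rpow_add_le_mul_rpow_add_rpow a.toNNReal b.toNNReal hp
  have h2 := NNReal.coe_le_coe.mpr h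
  push_cast at h2
  rwa [Real.coe_toNNReal a ha, Real.coe_toNNReal b hb] at h2

theorem stmt_13 (γ₁ γ₂ x₁ x₂ : ℝ) (h10 : 0 < γ₁) (h11 : γ₁ < 1) (h2 : 1 < γ₂)
    (hs : 0 < 1 - x₂ ^ 2) :
    -((|x₁| ^ (γ₁ + 1) + |x₂| ^ (γ₁ + 1)) / (1 - x₂ ^ 2) ^ ((γ₁ + 1) / 2)
        + (|x₁| ^ (γ₂ + 1) + |x₂| ^ (γ₂ + 1)) / (1 - x₂ ^ 2) ^ ((γ₂ + 1) / 2)) ≤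
      -(2 ^ ((γ₁ + 1) / 2) * ((x₁ ^ 2 + x₂ ^ 2) / (2 * (1 - x₂ ^ 2))) ^ ((γ₁ + 1) / 2))
        - 2 * ((x₁ ^ 2 + x₂ ^ 2) / (2 * (1 - x₂ ^ 2))) ^ ((γ₂ + 1) / 2) := by
  set s := 1 - x₂ ^ 2 with hsdef
  set n := x₁ ^ 2 + x₂ ^ 2 with hndef
  have hn : 0 ≤ n := by positivity
  have ht : (0:ℝ) < (γ₁ + 1) / 2 := by linarith
  have ht1 : (γ₁ + 1) / 2 ≤ 1 := by linarith
  have hr : (1:ℝ) ≤ (γ₂ + 1) / 2 := by linarith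
  have hsq1 : x₁ ^ 2 = |x₁| ^ 2 := (sq_abs x₁).symm
  have hsq2 : x₂ ^ 2 = |x₂| ^ 2 := (sq_abs x₂).symm
  have habs : ∀ y : ℝ, ∀ p : ℝ, (|y| ^ (2:ℕ)) ^ p = |y| ^ (2 * p) := by
    intro y p
    rw [← Real.rpow_natCast |y| 2, ← Real.rpow_mul (abs_nonneg y)]
    norm_num
  -- key inequality 1
  have key1 : n ^ ((γ₁ + 1) / 2) ≤ |x₁| ^ (γ₁ + 1) + |x₂| ^ (γ₁ + 1) := by
    have := auxA (x₁ ^ 2) (x₂ ^ 2) ((γ₁ + 1) / 2) (by positivity) (by positivity) ht.le ht1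
    rw [hsq1, hsq2, habs, habs] at this
    have h21 : 2 * ((γ₁ + 1) / 2) = γ₁ + 1 := by ring
    rwa [h21, ← hsq1, ← hsq2] at this
  -- key inequality 2
  have key2 : n ^ ((γ₂ + 1) / 2) ≤ 2 ^ ((γ₂ + 1) / 2 - 1) * (|x₁| ^ (γ₂ + 1) + |x₂| ^ (γ₂ + 1)) := by
    have := auxB (x₁ ^ 2) (x₂ ^ 2) ((γ₂ + 1) / 2) (by positivity) (by positivity) hr
    rw [hsq1, hsq2, habs, habs] at this
    have h21 : 2 * ((γ₂ + 1) / 2) = γ₂ + 1 := by ring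
    rwa [h21, ← hsq1, ← hsq2] at this
  -- rewrite RHS
  have hsp1 : (0:ℝ) < s ^ ((γ₁ + 1) / 2) := rpow_pos_of_pos hs _
  have hsp2 : (0:ℝ) < s ^ ((γ₂ + 1) / 2) := rpow_pos_of_pos hs _
  have hdiv : ∀ p : ℝ, (n / (2 * s)) ^ p = n ^ p / (2 ^ p * s ^ p) := by
    intro p
    rw [Real.div_rpow hn (by positivity), Real.mul_rpow (by norm_num) hs.le]
  rw [hdiv, hdiv]
  have e1 : 2 ^ ((γ₁ + 1) / 2) * (n ^ ((γ₁ + 1) / 2) / (2 ^ ((γ₁ + 1) / 2) * s ^ ((γ₁ + 1) / 2)))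
      = n ^ ((γ₁ + 1) / 2) / s ^ ((γ₁ + 1) / 2) := by
    field_simp
  have e2 : (2:ℝ) * (n ^ ((γ₂ + 1) / 2) / (2 ^ ((γ₂ + 1) / 2) * s ^ ((γ₂ + 1) / 2)))
      = (2 / 2 ^ ((γ₂ + 1) / 2)) * (n ^ ((γ₂ + 1) / 2) / s ^ ((γ₂ + 1) / 2)) := by
    field_simp
  rw [e1, e2]
  have key2' : (2 / 2 ^ ((γ₂ + 1) / 2)) * n ^ ((γ₂ + 1) / 2) ≤ |x₁| ^ (γ₂ + 1) + |x₂| ^ (γ₂ + 1) := by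
    have h2p : (0:ℝ) < 2 ^ ((γ₂ + 1) / 2) := rpow_pos_of_pos (by norm_num) _
    have h2e : (2:ℝ) * 2 ^ ((γ₂ + 1) / 2 - 1) = 2 ^ ((γ₂ + 1) / 2) := by
      rw [Real.rpow_sub (by norm_num), Real.rpow_one]; field_simp
    rw [div_mul_eq_mul_div, div_le_iff₀ h2p]
    calc 2 * n ^ ((γ₂ + 1) / 2)
        ≤ 2 * (2 ^ ((γ₂ + 1) / 2 - 1) * (|x₁| ^ (γ₂ + 1) + |x₂| ^ (γ₂ + 1))) := by linarith
      _ = (|x₁| ^ (γ₂ + 1) + |x₂| ^ (γ₂ + 1)) * 2 ^ ((γ₂ + 1) / 2) := by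
          rw [← mul_assoc, h2e]; ring
  have step1 : n ^ ((γ₁ + 1) / 2) / s ^ ((γ₁ + 1) / 2)
      ≤ (|x₁| ^ (γ₁ + 1) + |x₂| ^ (γ₁ + 1)) / s ^ ((γ₁ + 1) / 2) := by
    gcongr
  have step2 : (2 / 2 ^ ((γ₂ + 1) / 2)) * (n ^ ((γ₂ + 1) / 2) / s ^ ((γ₂ + 1) / 2))
      ≤ (|x₁| ^ (γ₂ + 1) + |x₂| ^ (γ₂ + 1)) / s ^ ((γ₂ + 1) / 2) := by
    rw [mul_div_assoc']
    gcongr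
  linarith
end
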